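/- arXiv:math/0109105 — 2 statements merged into one kernel-verified Lean document; each statement's English description precedes it below -/
import Mathlib

section
/- The Lusternik–Schnirelmann category of a product satisfies cat(A × B) ≤ cat(A) + cat(B) for path-connected spaces A and B having the homotopy type of CW-complexes. -/
/-- A subset `U` of `X` is contractible in `X` if the inclusion `U ↪ X` is nullhomotopic. -/
def NullhomotopicIn (X : Type*) [TopologicalSpace X] (U : Set X) : Prop :=
  ∃ x₀ : X, (⟨Subtype.val, continuous_subtype_val⟩ : C(U, X)).Homotopic
    (ContinuousMap.const U x₀)

/-- `LSCatLE X n` : `X` can be covered by `n+1` open sets, each contractible in `X`. -/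
def LSCatLE (X : Type*) [TopologicalSpace X] (n : ℕ) : Prop :=
  ∃ U : Fin (n + 1) → Set X, (∀ i, IsOpen (U i)) ∧ (∀ i, NullhomotopicIn X (U i)) ∧
    (⋃ i, U i) = Set.univ

/-- The normalized Lusternik–Schnirelmann category of `X`, valued in `ℕ∞`
(`⊤` if no finite categorical cover exists). -/
noncomputable def lsCat (X : Type*) [TopologicalSpace X] : ℕ∞ :=
  ⨅ n ∈ {n : ℕ | LSCatLE X n}, (n : ℕ∞)

/-- `X` has the homotopy type of a CW-complex. -/
def HasCWHomotopyType (X : Type*) [TopologicalSpace X] : Prop :=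
  ∃ (Y : TopCat.{0}) (_ : TopCat.CWComplex Y), Nonempty (ContinuousMap.HomotopyEquiv X Y)

/-!
Cover `A` and `B` by categorical open sets `U₀, …, Uₘ` and `V₀, …, Vₙ` and pick
subordinate partitions of unity `ρᵢ`, `τⱼ`. For each `r ≤ m + n`, the open sets where the
weight `ρᵢ(x) τⱼ(y)` is positive and strictly exceeds every other weight with `i + j = r` are
pairwise disjoint and lie in the sets `Uᵢ × Vⱼ`, which are contractible in `A × B`; since
`A × B` is path-connected, their union `W_r` is contractible in `A × B` as well. Taking `i`
and `j` to be the first maximisers of `ρ(x)` and `τ(y)` shows that the `m + n + 1` sets `W_r`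
cover `A × B`.

Partitions of unity need normality. The category is a homotopy invariant, so `A` and `B` may
be replaced by CW complexes, and these are normal: a Urysohn function for two disjoint closed
sets is built skeleton by skeleton, extended over each new cell by the Tietze extension
theorem.
-/

open Set Function Topology ContinuousMap

section LusternikSchnirelmann

variable {X Y : Type*} [TopologicalSpace X] [TopologicalSpace Y]

theorem NullhomotopicIn.mono {U V : Set X} (hU : NullhomotopicIn X U) (hVU : V ⊆ U) :
    NullhomotopicIn X V :=
  Nullhomotopic.comp_left hU (inclusion hVU)

theorem NullhomotopicIn.preimage (e : X ≃ₕ Y) {V : Set Y} (hV : NullhomotopicIn Y V) :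
    NullhomotopicIn X (e.toFun ⁻¹' V) := by
  let incl : C(e.toFun ⁻¹' V, X) := ⟨Subtype.val, continuous_subtype_val⟩
  have hnull : ((e.invFun.comp e.toFun).comp incl).Nullhomotopic :=
    (Nullhomotopic.comp_right hV e.invFun).comp_left (e.toFun.restrictPreimage V)
  obtain ⟨x, hx⟩ := hnull
  exact ⟨x, ((e.left_inv.comp (Homotopic.refl incl)).symm).trans hx⟩

theorem ContinuousMap.Nullhomotopic.prodMk {Z : Type*} [TopologicalSpace Z] {f : C(Z, X)}
    {g : C(Z, Y)} (hf : f.Nullhomotopic) (hg : g.Nullhomotopic) : (f.prodMk g).Nullhomotopic := by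
  obtain ⟨x, ⟨F⟩⟩ := hf
  obtain ⟨y, ⟨G⟩⟩ := hg
  exact ⟨(x, y), ⟨F.prod G⟩⟩

theorem NullhomotopicIn.prod {U : Set X} {V : Set Y} (hU : NullhomotopicIn X U)
    (hV : NullhomotopicIn Y V) : NullhomotopicIn (X × Y) (U ×ˢ V) :=
  Nullhomotopic.prodMk
    (Nullhomotopic.comp_left hU ⟨fun z : ↥(U ×ˢ V) => ⟨z.1.1, z.2.1⟩, by fun_prop⟩)
    (Nullhomotopic.comp_left hV ⟨fun z : ↥(U ×ˢ V) => ⟨z.1.2, z.2.2⟩, by fun_prop⟩)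

theorem NullhomotopicIn.iUnion [PathConnectedSpace X] {ι : Type*} {U : ι → Set X}
    (hUo : ∀ i, IsOpen (U i)) (hdisj : Pairwise (Disjoint on U))
    (hU : ∀ i, NullhomotopicIn X (U i)) : NullhomotopicIn X (⋃ i, U i) := by
  obtain ⟨x₀⟩ := PathConnectedSpace.nonempty (X := X)
  have H : ∀ i, Homotopy (⟨Subtype.val, continuous_subtype_val⟩ : C(U i, X)) (const _ x₀) :=
    fun i => (hU i).choose_spec.some.trans
      (PathConnectedSpace.somePath (hU i).choose x₀).toHomotopyConst
  let piece (i : ι) : Set (unitInterval × ↥(⋃ i, U i)) := {p | p.2.1 ∈ U i}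
  have piece_open (i : ι) : IsOpen (piece i) := (hUo i).preimage (by fun_prop)
  let H' (i : ι) : C(piece i, X) :=
    (H i).toContinuousMap.comp ⟨fun p => (p.1.1, ⟨p.1.2.1, p.2⟩), by fun_prop⟩
  have hcompat (i j : ι) (p) (hi : p ∈ piece i) (hj : p ∈ piece j) :
      H' i ⟨p, hi⟩ = H' j ⟨p, hj⟩ := by
    obtain rfl : i = j := hdisj.eq (not_disjoint_iff.mpr ⟨p.2.1, hi, hj⟩)
    rfl
  have hcover (p : unitInterval × ↥(⋃ i, U i)) : ∃ i, piece i ∈ 𝓝 p :=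
    (mem_iUnion.mp p.2.2).imp fun i hi => (piece_open i).mem_nhds hi
  let glued := liftCover piece H' hcompat hcover
  have glued_apply (t : unitInterval) (w : ↥(⋃ i, U i)) (i : ι) (hi : w.1 ∈ U i) :
      glued (t, w) = H i (t, ⟨w, hi⟩) :=
    liftCover_coe (i := i) ⟨(t, w), hi⟩
  refine ⟨x₀, ⟨{ toContinuousMap := glued, map_zero_left := ?_, map_one_left := ?_ }⟩⟩ <;>
  · intro w
    obtain ⟨i, hi⟩ := mem_iUnion.mp w.2
    simp [glued_apply _ _ i hi]

theorem LSCatLE.mono {m n : ℕ} (h : LSCatLE X m) (hmn : m ≤ n) : LSCatLE X n := by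
  obtain ⟨U, hUo, hUn, hUc⟩ := h
  refine ⟨fun i => U ⟨min i m, by omega⟩, fun _ => hUo _, fun _ => hUn _,
    eq_univ_of_univ_subset (hUc ▸ iUnion_subset fun j => ?_)⟩
  refine subset_iUnion_of_subset (Fin.castLE (by omega) j) (le_of_eq (congrArg U ?_))
  ext
  simp [Nat.lt_succ_iff.mp j.2]

theorem LSCatLE.of_homotopyEquiv (e : X ≃ₕ Y) {n : ℕ} (h : LSCatLE Y n) : LSCatLE X n := by
  obtain ⟨V, hVo, hVn, hVc⟩ := h
  refine ⟨fun i => e.toFun ⁻¹' V i, fun i => (hVo i).preimage e.toFun.continuous,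
    fun i => (hVn i).preimage e, ?_⟩
  rw [← preimage_iUnion, hVc, preimage_univ]

theorem lsCat_le_coe_iff {n : ℕ} : lsCat X ≤ n ↔ LSCatLE X n := by
  refine ⟨fun h => ?_, fun h => iInf₂_le n h⟩
  obtain ⟨m, hm_lt⟩ := iInf_lt_iff.mp ((ENat.lt_add_one_iff (ENat.natCast_ne_top n)).mpr h)
  obtain ⟨hm, hmn⟩ := iInf_lt_iff.mp hm_lt
  exact hm.mono (by exact_mod_cast (ENat.lt_add_one_iff (ENat.natCast_ne_top n)).mp hmn)

theorem lsCat_congr (e : X ≃ₕ Y) : lsCat X = lsCat Y :=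
  le_antisymm (le_iInf₂ fun _ hn => lsCat_le_coe_iff.mpr (hn.of_homotopyEquiv e))
    (le_iInf₂ fun _ hn => lsCat_le_coe_iff.mpr (hn.of_homotopyEquiv e.symm))

theorem ContinuousMap.HomotopyEquiv.pathConnectedSpace [PathConnectedSpace X] (e : X ≃ₕ Y) :
    PathConnectedSpace Y := by
  obtain ⟨x⟩ := PathConnectedSpace.nonempty (X := X)
  have joined_section (y : Y) : Joined (e.toFun (e.invFun y)) y := ⟨e.right_inv.some.evalAt y⟩
  refine ⟨⟨e.toFun x⟩, fun y y' => ?_⟩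
  exact ((joined_section y).symm.trans
    ((PathConnectedSpace.joined _ _).map e.toFun.continuous)).trans (joined_section y')

end LusternikSchnirelmann

section Product

variable {X Y : Type*} [TopologicalSpace X] [TopologicalSpace Y]

theorem Finite.exists_max_forall_lt_of_lt {ι α : Type*} [LinearOrder ι] [Finite ι]
    [Nonempty ι] [LinearOrder α] (v : ι → α) :
    ∃ i, (∀ j, v j ≤ v i) ∧ ∀ j < i, v j < v i := by
  obtain ⟨i₀, hi₀⟩ := Finite.exists_max v
  obtain ⟨i, hi, hmin⟩ := WellFounded.has_min wellFounded_lt {i | ∀ j, v j ≤ v i} ⟨i₀, hi₀⟩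
  refine ⟨i, hi, fun j hji => (hi j).lt_of_ne fun hji' => hmin j ?_ hji⟩
  exact fun k => hji' ▸ hi k

section DominantSet

variable {m n : ℕ} (ρ : PartitionOfUnity (Fin (m + 1)) X)
  (τ : PartitionOfUnity (Fin (n + 1)) Y)

def dominantSet (p : Fin (m + 1) × Fin (n + 1)) : Set (X × Y) :=
  {z | 0 < ρ p.1 z.1 * τ p.2 z.2 ∧ ∀ q : Fin (m + 1) × Fin (n + 1),
    (q.1 : ℕ) + q.2 = p.1 + p.2 → q ≠ p → ρ q.1 z.1 * τ q.2 z.2 < ρ p.1 z.1 * τ p.2 z.2}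

theorem isOpen_dominantSet (p : Fin (m + 1) × Fin (n + 1)) : IsOpen (dominantSet ρ τ p) := by
  have hw (q : Fin (m + 1) × Fin (n + 1)) :
      Continuous fun z : X × Y => ρ q.1 z.1 * τ q.2 z.2 := by
    fun_prop
  simp only [dominantSet, ofPred_and, ofPred_forall]
  exact (isOpen_lt continuous_const (hw p)).inter <| isOpen_iInter_of_finite fun q =>
    isOpen_iInter_of_finite fun _ => isOpen_iInter_of_finite fun _ => isOpen_lt (hw q) (hw p)

theorem dominantSet_subset_support (p : Fin (m + 1) × Fin (n + 1)) :
    dominantSet ρ τ p ⊆ support (ρ p.1) ×ˢ support (τ p.2) := by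
  intro z hz
  have := hz.1.ne'
  exact ⟨left_ne_zero_of_mul this, right_ne_zero_of_mul this⟩

theorem disjoint_dominantSet {p q : Fin (m + 1) × Fin (n + 1)} (hpq : p ≠ q)
    (hlevel : (p.1 : ℕ) + p.2 = q.1 + q.2) : Disjoint (dominantSet ρ τ p) (dominantSet ρ τ q) :=
  disjoint_left.mpr fun _ hp hq => (hp.2 q hlevel.symm hpq.symm).asymm (hq.2 p hlevel hpq)

theorem exists_mem_dominantSet (z : X × Y) : ∃ p, z ∈ dominantSet ρ τ p := by
  obtain ⟨i, hi_max, hi_min⟩ := Finite.exists_max_forall_lt_of_lt fun i => ρ i z.1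
  obtain ⟨j, hj_max, hj_min⟩ := Finite.exists_max_forall_lt_of_lt fun j => τ j z.2
  have hρ : 0 < ρ i z.1 := by
    obtain ⟨i', hi'⟩ := ρ.exists_pos (mem_univ z.1)
    exact hi'.trans_le (hi_max i')
  have hτ : 0 < τ j z.2 := by
    obtain ⟨j', hj'⟩ := τ.exists_pos (mem_univ z.2)
    exact hj'.trans_le (hj_max j')
  refine ⟨(i, j), mul_pos hρ hτ, fun ⟨i', j'⟩ hlevel hne => ?_⟩
  rcases lt_or_ge i' i with hi' | hi'
  · calc ρ i' z.1 * τ j' z.2 ≤ ρ i' z.1 * τ j z.2 := by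
          gcongr; exacts [ρ.nonneg _ _, hj_max j']
      _ < ρ i z.1 * τ j z.2 := by gcongr; exact hi_min i' hi'
  · have hj' : j' < j := by
      have : (i' : ℕ) ≠ i ∨ (j' : ℕ) ≠ j := by
        simpa [Prod.ext_iff, Fin.ext_iff, or_iff_not_imp_left] using hne
      simp only at hlevel
      rw [Fin.lt_def]; rw [Fin.le_def] at hi'
      omega
    calc ρ i' z.1 * τ j' z.2 ≤ ρ i z.1 * τ j' z.2 := by
          gcongr; exacts [τ.nonneg _ _, hi_max i']
      _ < ρ i z.1 * τ j z.2 := by gcongr; exact hj_min j' hj'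

end DominantSet

theorem LSCatLE.prod [NormalSpace X] [NormalSpace Y] [PathConnectedSpace X]
    [PathConnectedSpace Y] {m n : ℕ} (hX : LSCatLE X m) (hY : LSCatLE Y n) :
    LSCatLE (X × Y) (m + n) := by
  obtain ⟨U, hUo, hUn, hUc⟩ := hX
  obtain ⟨V, hVo, hVn, hVc⟩ := hY
  obtain ⟨ρ, hρ⟩ := PartitionOfUnity.exists_isSubordinate_of_locallyFinite isClosed_univ U hUo
    (locallyFinite_of_finite U) hUc.ge
  obtain ⟨τ, hτ⟩ := PartitionOfUnity.exists_isSubordinate_of_locallyFinite isClosed_univ V hVo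
    (locallyFinite_of_finite V) hVc.ge
  have hsub (p : Fin (m + 1) × Fin (n + 1)) : dominantSet ρ τ p ⊆ U p.1 ×ˢ V p.2 :=
    (dominantSet_subset_support ρ τ p).trans
      (prod_mono ((subset_tsupport _).trans (hρ _)) ((subset_tsupport _).trans (hτ _)))
  refine ⟨fun r => ⋃ p : {p : Fin (m + 1) × Fin (n + 1) // (p.1 : ℕ) + p.2 = r},
    dominantSet ρ τ p, fun r => isOpen_iUnion fun p => isOpen_dominantSet ρ τ p,
    fun r => ?_, ?_⟩
  · exact NullhomotopicIn.iUnion (fun p => isOpen_dominantSet ρ τ p)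
      (fun p q hpq =>
        disjoint_dominantSet ρ τ (Subtype.coe_injective.ne hpq) (p.2.trans q.2.symm))
      fun p => ((hUn _).prod (hVn _)).mono (hsub p)
  · refine eq_univ_of_forall fun z => ?_
    obtain ⟨p, hp⟩ := exists_mem_dominantSet ρ τ z
    exact mem_iUnion.mpr ⟨⟨p.1 + p.2, by omega⟩, mem_iUnion.mpr ⟨⟨p, rfl⟩, hp⟩⟩

theorem lsCat_prod_le [NormalSpace X] [NormalSpace Y] [PathConnectedSpace X]
    [PathConnectedSpace Y] : lsCat (X × Y) ≤ lsCat X + lsCat Y := by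
  induction hm : lsCat X using ENat.recTopCoe with
  | top => simp
  | coe m =>
    induction hn : lsCat Y using ENat.recTopCoe with
    | top => simp
    | coe n =>
      rw [← Nat.cast_add, lsCat_le_coe_iff]
      exact (lsCat_le_coe_iff.mp hm.le).prod (lsCat_le_coe_iff.mp hn.le)

end Product

section Normal

theorem NormalSpace.of_exists_eqOn_zero_one {X : Type*} [TopologicalSpace X]
    (h : ∀ C D : Set X, IsClosed C → IsClosed D → Disjoint C D →
      ∃ f : C(X, ℝ), EqOn f 0 C ∧ EqOn f 1 D) : NormalSpace X := by
  refine ⟨fun C D hC hD hCD => ?_⟩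
  obtain ⟨f, hf0, hf1⟩ := h C D hC hD hCD
  refine ⟨f ⁻¹' Iio (1 / 2), f ⁻¹' Ioi (1 / 2), isOpen_Iio.preimage f.continuous,
    isOpen_Ioi.preimage f.continuous, fun x hx => ?_, fun x hx => ?_,
    (Iio_disjoint_Ioi_same).preimage f⟩
  · simp [mem_preimage, hf0 hx]
  · norm_num [mem_preimage, hf1 hx]

theorem Topology.IsClosedEmbedding.exists_extension_eqOn_zero_one {S T : Type*}
    [TopologicalSpace S] [TopologicalSpace T] [NormalSpace T] {e : S → T}
    (he : IsClosedEmbedding e) (φ : C(S, ℝ)) {C D : Set T} (hC : IsClosed C) (hD : IsClosed D)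
    (hCD : Disjoint C D) (hφC : EqOn φ 0 (e ⁻¹' C)) (hφD : EqOn φ 1 (e ⁻¹' D)) :
    ∃ ψ : C(T, ℝ), ψ ∘ e = φ ∧ EqOn ψ 0 C ∧ EqOn ψ 1 D := by
  classical
  obtain ⟨ψ₀, hψ₀⟩ := φ.exists_extension' he
  let γ : T → ℝ := C.piecewise 0 (D.piecewise 1 ψ₀)
  have hγC : EqOn γ 0 C := fun x hx => piecewise_eq_of_mem _ _ _ hx
  have hγD : EqOn γ 1 D := fun x hx => by
    simp [γ, hx, disjoint_right.mp hCD hx]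
  have hγe : γ ∘ e = φ := funext fun s => by
    by_cases hsC : e s ∈ C
    · exact (hγC hsC).trans (hφC hsC).symm
    by_cases hsD : e s ∈ D
    · exact (hγD hsD).trans (hφD hsD).symm
    simp [γ, hsC, hsD, ← hψ₀]
  have hγ_range : EqOn γ ψ₀ (range e) := by
    rintro _ ⟨s, rfl⟩
    exact (congrFun hγe s).trans (congrFun hψ₀ s).symm
  let K := range e ∪ C ∪ D
  have hK : IsClosed K := (he.isClosed_range.union hC).union hD
  have hγK : ContinuousOn γ K :=
    ((ψ₀.continuous.continuousOn.congr hγ_range).union_of_isClosed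
      (continuousOn_const.congr hγC) he.isClosed_range hC).union_of_isClosed
      (continuousOn_const.congr hγD) (he.isClosed_range.union hC) hD
  obtain ⟨ψ, hψ⟩ := ContinuousMap.exists_restrict_eq hK ⟨K.domRestrict γ, hγK.domRestrict⟩
  have hψγ : EqOn ψ γ K := fun x hx => DFunLike.congr_fun hψ ⟨x, hx⟩
  exact ⟨ψ, (funext fun s => hψγ (Or.inl (Or.inl ⟨s, rfl⟩))).trans hγe,
    (hψγ.mono (subset_union_right.trans subset_union_left)).trans hγC,
    (hψγ.mono subset_union_right).trans hγD⟩

end Normal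

section CellComplex

open CategoryTheory Limits HomotopicalAlgebra TopCat

namespace HomotopicalAlgebra.AttachCells

variable {α : Type*} {A B : α → TopCat.{0}} {g : ∀ a, A a ⟶ B a} {X₁ X₂ : TopCat.{0}}
  {f : X₁ ⟶ X₂}

theorem exists_eq_or_exists_cell_eq (c : AttachCells.{0} g f) (x : X₂) :
    (∃ y, f y = x) ∨ ∃ i b, c.cell i b = x := by
  obtain ⟨j, y, hy⟩ := Concrete.isColimit_exists_rep _ c.isPushout.isColimit x
  rcases j with _ | _ | _
  · exact Or.inl ⟨c.g₁ y, hy⟩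
  · exact Or.inl ⟨y, hy⟩
  · obtain ⟨⟨i⟩, b, rfl⟩ := Concrete.isColimit_exists_rep _ c.isColimit₂ y
    exact Or.inr ⟨i, b, hy⟩

theorem cell_comp (c : AttachCells.{0} g f) (i : c.ι) :
    g (c.π i) ≫ c.cell i = c.cofan₁.inj i ≫ c.g₁ ≫ f := by
  rw [c.cell_def, c.isPushout.w, ← Category.assoc, ← Category.assoc, c.hm]

theorem exists_extension_eqOn_zero_one (c : AttachCells.{0} g f)
    (hg : ∀ a, IsClosedEmbedding (g a)) [∀ a, NormalSpace (B a)] {C D : Set X₂}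
    (hC : IsClosed C) (hD : IsClosed D) (hCD : Disjoint C D) (φ : X₁ ⟶ TopCat.of ℝ)
    (hφC : EqOn φ 0 (f ⁻¹' C)) (hφD : EqOn φ 1 (f ⁻¹' D)) :
    ∃ ψ : X₂ ⟶ TopCat.of ℝ, f ≫ ψ = φ ∧ EqOn ψ 0 C ∧ EqOn ψ 1 D := by
  have hcell_sq (i : c.ι) (a : A (c.π i)) :
      c.cell i (g (c.π i) a) = f (c.g₁ (c.cofan₁.inj i a)) :=
    ConcreteCategory.congr_hom (c.cell_comp i) a
  have hcell_cont (i : c.ι) : Continuous (c.cell i) := (c.cell i).hom.continuous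
  have hext (i : c.ι) := (hg (c.π i)).exists_extension_eqOn_zero_one
    (c.cofan₁.inj i ≫ c.g₁ ≫ φ).hom (hC.preimage (hcell_cont i)) (hD.preimage (hcell_cont i))
    (hCD.preimage _) (fun a ha => hφC (show f _ ∈ C from hcell_sq i a ▸ ha))
    (fun a ha => hφD (show f _ ∈ D from hcell_sq i a ▸ ha))
  choose h hh_ext hhC hhD using hext
  let σ : c.cofan₂.pt ⟶ TopCat.of ℝ :=
    Cofan.IsColimit.desc c.isColimit₂ fun i => ofHom (h i)
  have hσ (i : c.ι) : c.cofan₂.inj i ≫ σ = ofHom (h i) := Cofan.IsColimit.fac _ _ i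
  have hw : c.g₁ ≫ φ = c.m ≫ σ := Cofan.IsColimit.hom_ext c.isColimit₁ _ _ fun i => by
    rw [c.hm_assoc, hσ]
    ext a
    exact (congrFun (hh_ext i) a).symm
  let ψ := c.isPushout.desc φ σ hw
  have hψ_cell (i : c.ι) : c.cell i ≫ ψ = ofHom (h i) := by
    rw [c.cell_def, Category.assoc, IsPushout.inr_desc, hσ]
  have hψ_f : f ≫ ψ = φ := c.isPushout.inl_desc _ _ _
  refine ⟨ψ, hψ_f, fun x hx => ?_, fun x hx => ?_⟩ <;>
  obtain ⟨y, rfl⟩ | ⟨i, b, rfl⟩ := c.exists_eq_or_exists_cell_eq x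
  · exact (ConcreteCategory.congr_hom hψ_f y).trans (hφC hx)
  · exact (ConcreteCategory.congr_hom (hψ_cell i) b).trans (hhC i hx)
  · exact (ConcreteCategory.congr_hom hψ_f y).trans (hφD hx)
  · exact (ConcreteCategory.congr_hom (hψ_cell i) b).trans (hhD i hx)

end HomotopicalAlgebra.AttachCells

theorem HomotopicalAlgebra.RelativeCellComplex.normalSpace {α : ℕ → Type*}
    {A B : (j : ℕ) → α j → TopCat.{0}} {basicCell : (j : ℕ) → (i : α j) → A j i ⟶ B j i}
    {X Y : TopCat.{0}} {f : X ⟶ Y} (c : RelativeCellComplex.{0} basicCell f)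
    (hcell : ∀ j i, IsClosedEmbedding (basicCell j i)) [∀ j i, NormalSpace (B j i)]
    [NormalSpace X] : NormalSpace Y := by
  refine .of_exists_eqOn_zero_one fun C D hC hD hCD => ?_
  let ι (n : ℕ) : c.F.obj n ⟶ Y := c.incl.app n
  have hι_cont (n : ℕ) : Continuous (ι n) := (ι n).hom.continuous
  let Separating (n : ℕ) (φ : c.F.obj n ⟶ TopCat.of ℝ) : Prop :=
    EqOn φ 0 (ι n ⁻¹' C) ∧ EqOn φ 1 (ι n ⁻¹' D)
  have base : ∃ φ, Separating 0 φ := by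
    have : NormalSpace (c.F.obj 0) := (homeoOfIso c.isoBot).symm.normalSpace
    obtain ⟨φ, hφC, hφD, -⟩ := exists_continuous_zero_one_of_isClosed
      (hC.preimage (hι_cont 0)) (hD.preimage (hι_cont 0)) (hCD.preimage _)
    exact ⟨ofHom φ, hφC, hφD⟩
  have step (n : ℕ) (φ : c.F.obj n ⟶ TopCat.of ℝ) (hφ : Separating n φ) :
      ∃ ψ, c.F.map (homOfLE n.le_succ) ≫ ψ = φ ∧ Separating (n + 1) ψ := by
    have hι (x : c.F.obj n) : ι (n + 1) (c.F.map (homOfLE n.le_succ) x) = ι n x :=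
      ConcreteCategory.congr_hom
        ((c.incl.naturality (homOfLE n.le_succ)).trans (Category.comp_id _)) x
    obtain ⟨ψ, hψ, hψC, hψD⟩ :=
      (c.attachCells n (not_isMax n)).exists_extension_eqOn_zero_one (hcell n)
        (hC.preimage (hι_cont _)) (hD.preimage (hι_cont _)) (hCD.preimage _) φ
        (fun x hx => hφ.1 (show ι n x ∈ C from hι x ▸ hx))
        (fun x hx => hφ.2 (show ι n x ∈ D from hι x ▸ hx))
    exact ⟨ψ, hψ, hψC, hψD⟩
  choose next hnext hsep using step
  let seq (n : ℕ) : {φ // Separating n φ} :=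
    Nat.rec ⟨_, base.choose_spec⟩ (fun n φ => ⟨next n φ.1 φ.2, hsep n φ.1 φ.2⟩) n
  let s : Cocone c.F := ⟨TopCat.of ℝ, NatTrans.ofSequence (fun n => (seq n).1)
    fun n => by simpa using hnext n _ (seq n).2⟩
  let G := c.isColimit.desc s
  have hG (n : ℕ) (x : c.F.obj n) : G (ι n x) = (seq n).1 x :=
    ConcreteCategory.congr_hom (c.isColimit.fac s n) x
  refine ⟨G.hom, fun y hy => ?_, fun y hy => ?_⟩ <;>
  obtain ⟨n, x, rfl⟩ := Concrete.isColimit_exists_rep _ c.isColimit y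
  · exact (hG n x).trans ((seq n).2.1 hy)
  · exact (hG n x).trans ((seq n).2.2 hy)

instance (n : ℕ) : T2Space (𝔻 n) :=
  inferInstanceAs (T2Space (ULift (Metric.closedBall (0 : EuclideanSpace ℝ (Fin n)) 1)))

theorem TopCat.isClosedEmbedding_diskBoundaryInclusion (n : ℕ) :
    IsClosedEmbedding (diskBoundaryInclusion n) :=
  (diskBoundaryInclusion n).hom.continuous.isClosedEmbedding
    ((TopCat.mono_iff_injective _).mp inferInstance)

instance : IsEmpty (⊥_ TopCat.{0}) :=
  ⟨fun x => PEmpty.elim (initial.to (TopCat.of PEmpty) x)⟩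

theorem TopCat.CWComplex.normalSpace {X : TopCat.{0}} (c : CWComplex X) : NormalSpace X :=
  RelativeCellComplex.normalSpace c fun n _ => isClosedEmbedding_diskBoundaryInclusion n

end CellComplex

/-- Product formula for Lusternik–Schnirelmann category: for path-connected spaces `A`, `B`
having the homotopy type of CW-complexes, `cat(A × B) ≤ cat(A) + cat(B)`. -/
theorem stmt3 (A B : Type) [TopologicalSpace A] [TopologicalSpace B]
    [PathConnectedSpace A] [PathConnectedSpace B]
    (hA : HasCWHomotopyType A) (hB : HasCWHomotopyType B) :
    lsCat (A × B) ≤ lsCat A + lsCat B := by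
  obtain ⟨YA, cwA, ⟨eA⟩⟩ := hA
  obtain ⟨YB, cwB, ⟨eB⟩⟩ := hB
  have := cwA.normalSpace
  have := cwB.normalSpace
  have := eA.pathConnectedSpace
  have := eB.pathConnectedSpace
  calc lsCat (A × B) = lsCat (YA × YB) := lsCat_congr (eA.prodCongr eB)
    _ ≤ lsCat YA + lsCat YB := lsCat_prod_le
    _ = lsCat A + lsCat B := by rw [lsCat_congr eA, lsCat_congr eB]
end

section
/- If a pointed map j: A → B admits a left homotopy inverse and k: C → D admits a left homotopy inverse, then the join j ∗ k: A ∗ C → B ∗ D admits a left homotopy inverse. -/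
/-- The relation defining the topological join `X ∗ Y` as a quotient of `X × I × Y`. -/
def joinRel (X Y : Type*) : (X × unitInterval × Y) → (X × unitInterval × Y) → Prop :=
  fun p q => (p.2.1 = 0 ∧ q.2.1 = 0 ∧ p.1 = q.1) ∨ (p.2.1 = 1 ∧ q.2.1 = 1 ∧ p.2.2 = q.2.2)

/-- The topological join `X ∗ Y`. -/
def Join (X Y : Type*) [TopologicalSpace X] [TopologicalSpace Y] : Type _ :=
  Quot (joinRel X Y)

instance (X Y : Type*) [TopologicalSpace X] [TopologicalSpace Y] :
    TopologicalSpace (Join X Y) := instTopologicalSpaceQuot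

/-- The map induced on joins by a pair of continuous maps. -/
noncomputable def Join.map {A B C D : Type*} [TopologicalSpace A] [TopologicalSpace B]
    [TopologicalSpace C] [TopologicalSpace D] (j : C(A, B)) (k : C(C, D)) :
    C(Join A C, Join B D) where
  toFun := Quot.map (fun p => (j p.1, p.2.1, k p.2.2))
    (by rintro p q (⟨h0, h0', h⟩ | ⟨h1, h1', h⟩)
        · exact Or.inl ⟨h0, h0', by simp [h]⟩
        · exact Or.inr ⟨h1, h1', by simp [h]⟩)
  continuous_toFun := by
    apply continuous_quot_lift
    exact (continuous_quot_mk.comp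
      ((j.continuous.comp continuous_fst).prodMk
        ((continuous_fst.comp continuous_snd).prodMk
          (k.continuous.comp (continuous_snd.comp continuous_snd)))))

/-- `f` has a left homotopy inverse. -/
def HasLeftHomotopyInverse {X Y : Type*} [TopologicalSpace X] [TopologicalSpace Y]
    (f : C(X, Y)) : Prop :=
  ∃ g : C(Y, X), (g.comp f).Homotopic (ContinuousMap.id X)

namespace Join

variable {A B C D E F : Type*} [TopologicalSpace A] [TopologicalSpace B] [TopologicalSpace C]
  [TopologicalSpace D] [TopologicalSpace E] [TopologicalSpace F]

theorem map_comp (j : C(A, B)) (j' : C(B, C)) (k : C(D, E)) (k' : C(E, F)) :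
    (map j' k').comp (map j k) = map (j'.comp j) (k'.comp k) := by
  ext x
  induction x using Quot.ind
  rfl

theorem map_id :
    map (ContinuousMap.id A) (ContinuousMap.id C) = ContinuousMap.id (Join A C) := by
  ext x
  induction x using Quot.ind
  rfl

/-- Continuity in `(t, x)` holds because `I` is locally compact, so `id × Quot.mk` is still a
quotient map. -/
noncomputable def mapHomotopy {f₀ f₁ : C(A, B)} {g₀ g₁ : C(C, D)} (H : f₀.Homotopy f₁)
    (K : g₀.Homotopy g₁) : (map f₀ g₀).Homotopy (map f₁ g₁) where
  toFun p := map (H.curry p.1) (K.curry p.1) p.2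
  continuous_toFun := isQuotientMap_quot_mk.continuous_lift_prod_right <|
    continuous_quot_mk.comp (by simp only [ContinuousMap.Homotopy.curry_apply]; fun_prop)
  map_zero_left x := by simp
  map_one_left x := by simp

theorem map_homotopic {f₀ f₁ : C(A, B)} {g₀ g₁ : C(C, D)} (hf : f₀.Homotopic f₁)
    (hg : g₀.Homotopic g₁) : (map f₀ g₀).Homotopic (map f₁ g₁) :=
  Nonempty.map2 mapHomotopy hf hg

end Join

/-- If `j : A → B` and `k : C → D` admit left homotopy inverses, then so does the induced map
`j ∗ k : A ∗ C → B ∗ D` of topological joins. -/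
theorem stmt19 {A B C D : Type*} [TopologicalSpace A] [TopologicalSpace B]
    [TopologicalSpace C] [TopologicalSpace D] (j : C(A, B)) (k : C(C, D))
    (hj : HasLeftHomotopyInverse j) (hk : HasLeftHomotopyInverse k) :
    HasLeftHomotopyInverse (Join.map j k) := by
  obtain ⟨g, hg⟩ := hj
  obtain ⟨h, hh⟩ := hk
  refine ⟨Join.map g h, ?_⟩
  rw [Join.map_comp, ← Join.map_id]
  exact Join.map_homotopic hg hh
end
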